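/- Let θ₀ > 0, β* > 0, γ > 0, and suppose z > 0 satisfies z = 1 + β* θ(z) tanh(θ(z)), where θ(z) = θ₀ exp((γ/2)(1 − 1/z)). Then 1 < z < 1 + β* θ₀ e^{γ/2}. -/

import Mathlib

/-! Since `0 < tanh θ < 1` for `θ > 0`, the right-hand side `1 + β* θ tanh θ` lies strictly between
`1` and `1 + β* θ`; the first bound gives `z > 1`, and then `1 - 1/z < 1` gives `θ(z) < θ₀ e^{γ/2}`. -/

namespace Real

theorem tanh_pos {x : ℝ} (hx : 0 < x) : 0 < tanh x := by
  rw [tanh_eq_sinh_div_cosh]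
  exact div_pos (sinh_pos_iff.mpr hx) (cosh_pos x)

variable {b x : ℝ}

theorem one_lt_one_add_mul_mul_tanh (hb : 0 < b) (hx : 0 < x) : 1 < 1 + b * x * tanh x := by
  have := mul_pos (mul_pos hb hx) (tanh_pos hx)
  linarith

theorem one_add_mul_mul_tanh_lt (hb : 0 < b) (hx : 0 < x) : 1 + b * x * tanh x < 1 + b * x := by
  have := mul_lt_mul_of_pos_left (tanh_lt_one x) (mul_pos hb hx)
  linarith

end Real

theorem exp_mul_one_sub_inv_lt_exp {c z : ℝ} (hc : 0 < c) (hz : 0 < z) :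
    Real.exp (c * (1 - 1 / z)) < Real.exp c := by
  have : 0 < c * (1 / z) := by positivity
  exact Real.exp_lt_exp.mpr (by linarith [mul_sub c 1 (1 / z)])

theorem stmt_11_general (θ₀ βstar γ z : ℝ)
    (hθ₀ : 0 < θ₀) (hβ : 0 < βstar) (hγ : 0 < γ)
    (hss : z = 1 + βstar * (θ₀ * Real.exp ((γ / 2) * (1 - 1 / z))) *
        Real.tanh (θ₀ * Real.exp ((γ / 2) * (1 - 1 / z)))) :
    1 < z ∧ z < 1 + βstar * θ₀ * Real.exp (γ / 2) := by
  set θ := θ₀ * Real.exp ((γ / 2) * (1 - 1 / z))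
  have hθ : 0 < θ := by positivity
  have hz : 1 < z := hss ▸ Real.one_lt_one_add_mul_mul_tanh hβ hθ
  refine ⟨hz, ?_⟩
  calc z = 1 + βstar * θ * Real.tanh θ := hss
    _ < 1 + βstar * θ := Real.one_add_mul_mul_tanh_lt hβ hθ
    _ < 1 + βstar * θ₀ * Real.exp (γ / 2) := by
      rw [mul_assoc]
      gcongr
      exact mul_lt_mul_of_pos_left
        (exp_mul_one_sub_inv_lt_exp (half_pos hγ) (zero_lt_one.trans hz)) hθ₀

/-- A priori bounds on every steady state of the slab pellet: if `z > 0` solves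
`z = 1 + β* θ(z) tanh(θ(z))` with `θ(z) = θ₀ exp((γ/2)(1 − 1/z))`, then
`1 < z < 1 + β* θ₀ e^{γ/2}`. -/
theorem stmt_11 (θ₀ βstar γ z : ℝ)
    (hθ₀ : 0 < θ₀) (hβ : 0 < βstar) (hγ : 0 < γ) (hz : 0 < z)
    (hss : z = 1 + βstar * (θ₀ * Real.exp ((γ / 2) * (1 - 1 / z))) *
        Real.tanh (θ₀ * Real.exp ((γ / 2) * (1 - 1 / z)))) :
    1 < z ∧ z < 1 + βstar * θ₀ * Real.exp (γ / 2) :=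
  stmt_11_general θ₀ βstar γ z hθ₀ hβ hγ hss
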